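/- The map d on the graded algebra Ω* spanned by elements u·T_z·R_g (u ∈ Λ(ℝ²ⁿ), z ∈ ℂⁿ, g ∈ U(n)), defined by d(u T_z R_g) = (−1)^{deg u} u·σ(z)·T_z R_g, is a graded differentiation: d² = 0 and d(a₁a₂) = (da₁)a₂ + (−1)^{deg a₁} a₁ (da₂). -/
import Mathlib


open Complex Matrix

noncomputable section

/-- Complexified exterior algebra `Λ(ℝ²ⁿ)⊗ℂ` of forms on `ℝ²ⁿ ≅ T*ℝⁿ`
(coordinates indexed by `Fin n ⊕ Fin n`: first the `dx`, then the `dp` components). -/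
abbrev FormAlg (n : ℕ) := ExteriorAlgebra ℂ (Fin n ⊕ Fin n → ℂ)

/-- The coefficient vector of the 1-form `σ(z) = Σⱼ(−kⱼ dxⱼ + aⱼ dpⱼ)` for
`z = a − ik ∈ ℂⁿ`. -/
def sigmaVec {n : ℕ} (z : Fin n → ℂ) : Fin n ⊕ Fin n → ℂ :=
  Sum.elim (fun j => ((z j).im : ℂ)) (fun j => ((z j).re : ℂ))

/-- The 1-form `σ(z)` as an element of the exterior algebra. -/
def sigmaElt {n : ℕ} (z : Fin n → ℂ) : FormAlg n :=
  ExteriorAlgebra.ι ℂ (sigmaVec z)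

/-- The (complexified) realification of `g ∈ U(n)` under `(x,p) ↦ z = p + ix`: `g = B + iA`
acts on `(x,p)` by `[[B, A],[−A, B]]`.  Since this matrix is orthogonal, it is also the matrix
of the action `(g*)^{-1}` on the coefficient vectors of 1-forms. -/
def realifyC {n : ℕ} (g : Matrix (Fin n) (Fin n) ℂ) :
    Matrix (Fin n ⊕ Fin n) (Fin n ⊕ Fin n) ℂ :=
  Matrix.fromBlocks (g.map fun c => ((c.re : ℝ) : ℂ)) (g.map fun c => ((c.im : ℝ) : ℂ))
    (-(g.map fun c => ((c.im : ℝ) : ℂ))) (g.map fun c => ((c.re : ℝ) : ℂ))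

/-- The induced action `(g*)^{-1}` on forms, i.e. the functorial extension of the realified
action on 1-form coefficient vectors to the exterior algebra. -/
def pullForm {n : ℕ} (g : Matrix (Fin n) (Fin n) ℂ) : FormAlg n →ₐ[ℂ] FormAlg n :=
  ExteriorAlgebra.map (Matrix.toLin' (realifyC g))

/-- The scalar `e^{-i·Im(z₁, g₁z₂)/2}` appearing in the product
`(u₁T_{z₁}R_{g₁})(u₂T_{z₂}R_{g₂}) = e^{-i·Im(z₁,g₁z₂)/2}·(u₁ ∧ (g₁*)^{-1}u₂)·T_{z₁+g₁z₂}R_{g₁g₂}`,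
where `(z,w) = Σ zⱼ\overline{wⱼ}`. -/
def prodScalar {n : ℕ} (z₁ : Fin n → ℂ) (g₁ : Matrix (Fin n) (Fin n) ℂ) (z₂ : Fin n → ℂ) : ℂ :=
  Complex.exp (-I * (((∑ j : Fin n, z₁ j * (starRingEnd ℂ) ((g₁.mulVec z₂) j)).im : ℝ)) / 2)

lemma realify_sigmaVec {n : ℕ} (g : Matrix (Fin n) (Fin n) ℂ) (z : Fin n → ℂ) :
    Matrix.toLin' (realifyC g) (sigmaVec z) = sigmaVec (g.mulVec z) := by
  funext x
  rw [Matrix.toLin'_apply, realifyC, Matrix.fromBlocks_mulVec]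
  cases x with
  | inl j =>
      simp [sigmaVec, Matrix.mulVec, dotProduct, Complex.im_sum, Complex.mul_im,
        Finset.sum_add_distrib, mul_comm]
  | inr j =>
      simp [sigmaVec, Matrix.mulVec, dotProduct, Complex.re_sum, Complex.mul_re,
        mul_comm, sub_eq_neg_add, Finset.sum_add_distrib, Finset.sum_neg_distrib]

lemma iota_comm {n : ℕ} (v : Fin n ⊕ Fin n → ℂ) {d : ℕ} {w : FormAlg n}
    (hw : w ∈ (LinearMap.range (ExteriorAlgebra.ι ℂ (M := Fin n ⊕ Fin n → ℂ)) ^ d :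
      Submodule ℂ (FormAlg n))) :
    ExteriorAlgebra.ι ℂ v * w = (-1 : ℂ) ^ d • (w * ExteriorAlgebra.ι ℂ v) := by
  induction hw using Submodule.pow_induction_on_left' with
  | algebraMap r => simp [Algebra.commutes]
  | add x y i hx hy ihx ihy => simp [mul_add, add_mul, ihx, ihy, smul_add]
  | mem_mul m hm i x hx ih =>
      obtain ⟨a, rfl⟩ := hm
      have h : ExteriorAlgebra.ι ℂ v * ExteriorAlgebra.ι ℂ a
          = -(ExteriorAlgebra.ι ℂ a * ExteriorAlgebra.ι ℂ v) :=
        eq_neg_of_add_eq_zero_left (ExteriorAlgebra.ι_add_mul_swap v a)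
      rw [← mul_assoc, h, neg_mul, mul_assoc, ih, pow_succ]
      rw [mul_smul_comm]
      rw [mul_assoc]
      module

lemma pullForm_mem {n : ℕ} (g : Matrix (Fin n) (Fin n) ℂ) {d : ℕ} {u : FormAlg n}
    (hu : u ∈ (LinearMap.range (ExteriorAlgebra.ι ℂ (M := Fin n ⊕ Fin n → ℂ)) ^ d :
      Submodule ℂ (FormAlg n))) :
    pullForm g u ∈ (LinearMap.range (ExteriorAlgebra.ι ℂ (M := Fin n ⊕ Fin n → ℂ)) ^ d :
      Submodule ℂ (FormAlg n)) := by
  induction hu using Submodule.pow_induction_on_left' with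
  | algebraMap r =>
      rw [AlgHom.commutes, pow_zero]
      exact Submodule.algebraMap_mem r
  | add x y i hx hy ihx ihy => simpa [map_add] using add_mem ihx ihy
  | mem_mul m hm i x hx ih =>
      obtain ⟨a, rfl⟩ := hm
      rw [_root_.map_mul, pullForm, ExteriorAlgebra.map_apply_ι, pow_succ']
      exact Submodule.mul_mem_mul (LinearMap.mem_range_self _ _) ih

/-- The map `d(u T_z R_g) = (−1)^{deg u}·(u ∧ σ(z))·T_z R_g` is a graded differentiation on the
algebra `Ω*` of finite sums of elements `u T_z R_g`: stated on generators with homogeneous form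
part (which span `Ω*`).  First conjunct: `d² = 0` — the form part of `d(d(u T_z R_g))` vanishes.
Second conjunct: the graded Leibniz rule `d(a₁a₂) = (da₁)a₂ + (−1)^{deg a₁}a₁(da₂)`, expressed
on the form parts (the `T`- and `R`-components of all three terms coincide, being
`T_{z₁+g₁z₂}R_{g₁g₂}`). -/
theorem graded_differentiation (n : ℕ)
    (g₁ : Matrix (Fin n) (Fin n) ℂ) (hg₁ : g₁ ∈ Matrix.unitaryGroup (Fin n) ℂ)
    (z₁ z₂ : Fin n → ℂ) (d₁ d₂ : ℕ) (u₁ u₂ : FormAlg n)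
    (hu₁ : u₁ ∈ (LinearMap.range (ExteriorAlgebra.ι ℂ (M := Fin n ⊕ Fin n → ℂ)) ^ d₁ :
      Submodule ℂ (FormAlg n)))
    (hu₂ : u₂ ∈ (LinearMap.range (ExteriorAlgebra.ι ℂ (M := Fin n ⊕ Fin n → ℂ)) ^ d₂ :
      Submodule ℂ (FormAlg n))) :
    -- d² = 0 :
    ((-1 : ℂ) ^ (d₁ + 1) • ((((-1 : ℂ) ^ d₁ • (u₁ * sigmaElt z₁)) * sigmaElt z₁)) = 0) ∧
    -- graded Leibniz rule :
    ((-1 : ℂ) ^ (d₁ + d₂) •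
        (prodScalar z₁ g₁ z₂ • ((u₁ * pullForm g₁ u₂) * sigmaElt (z₁ + g₁.mulVec z₂)))
      = prodScalar z₁ g₁ z₂ •
          (((-1 : ℂ) ^ d₁ • (u₁ * sigmaElt z₁)) * pullForm g₁ u₂)
        + (-1 : ℂ) ^ d₁ •
          (prodScalar z₁ g₁ z₂ •
            (u₁ * pullForm g₁ ((-1 : ℂ) ^ d₂ • (u₂ * sigmaElt z₂))))) := by
  constructor
  · rw [smul_mul_assoc, mul_assoc, sigmaElt, ExteriorAlgebra.ι_sq_zero, mul_zero,
      smul_zero, smul_zero]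
  · have hadd : sigmaElt (z₁ + g₁.mulVec z₂) = sigmaElt z₁ + pullForm g₁ (sigmaElt z₂) := by
      simp only [sigmaElt, pullForm]
      rw [ExteriorAlgebra.map_apply_ι, realify_sigmaVec]
      rw [← map_add]
      congr 1
      funext x
      cases x <;> simp [sigmaVec, Complex.add_im, Complex.add_re]
    have hw₂ := pullForm_mem g₁ hu₂
    have hcomm : sigmaElt z₁ * pullForm g₁ u₂
        = (-1 : ℂ) ^ d₂ • (pullForm g₁ u₂ * sigmaElt z₁) := iota_comm _ hw₂
    have hback : pullForm g₁ u₂ * sigmaElt z₁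
        = (-1 : ℂ) ^ d₂ • (sigmaElt z₁ * pullForm g₁ u₂) := by
      rw [hcomm, smul_smul, ← pow_add, ← two_mul, pow_mul]
      norm_num
    rw [_root_.map_smul, _root_.map_mul]
    set σ₁ := sigmaElt z₁
    set w₂ := pullForm g₁ u₂
    set σ₂' := pullForm g₁ (sigmaElt z₂)
    set c := prodScalar z₁ g₁ z₂
    rw [hadd, mul_add, smul_mul_assoc, mul_assoc u₁ σ₁ w₂, hcomm]
    simp only [mul_smul_comm, smul_smul, ← mul_assoc, pow_add]
    module

end
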